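/- Let ν be the uniform probability measure on the equator E = {(cos φ, sin φ, 0) : φ ∈ [0,2π)} of the unit sphere S² in ℝ³. Then for every C ∈ [0,1], g(C,ν) = (2/π) ∫₀^{π/2} √(1 − (1−C²) sin²φ) dφ; in particular g*(ν) = g(0,ν) = 2/π. Moreover, every Borel probability measure μ on S² whose support is contained in the equator E satisfies g(C,μ) ≥ g(C,ν) for all C ∈ [0,1]. -/

import Mathlib

open MeasureTheory Real
open scoped ENNReal

noncomputable section

abbrev E3 := EuclideanSpace ℝ (Fin 3)

/-- The unit sphere S² in ℝ³. -/
def unitSphere : Set E3 := Metric.sphere (0 : E3) 1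

/-- `g C μ` is the supremum over unit vectors `v` of `∫ √(C² + (1−C²)⟨r,v⟩²) dμ(r)`. -/
def g (C : ℝ) (μ : Measure E3) : ℝ :=
  ⨆ v : unitSphere, ∫ r, Real.sqrt (C ^ 2 + (1 - C ^ 2) * (inner ℝ r (v : E3) : ℝ) ^ 2) ∂μ


/-- The point `(cos φ, sin φ, 0)` on the equator of the unit sphere. -/
def eqPt (φ : ℝ) : E3 := (WithLp.equiv 2 (Fin 3 → ℝ)).symm ![Real.cos φ, Real.sin φ, 0]

/-- The uniform probability measure on the equator: the pushforward of the normalized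
Lebesgue measure on `[0, 2π)` under `φ ↦ (cos φ, sin φ, 0)`. -/
def equatorUniform : Measure E3 :=
  Measure.map eqPt ((ENNReal.ofReal (2 * π))⁻¹ • volume.restrict (Set.Ico 0 (2 * π)))

/-!
For a unit vector `v`, write `(v₀, v₁) = ρ (cos ψ, sin ψ)`; then `⟨eqPt φ, v⟩ = ρ cos (φ - ψ)`,
so by rotation invariance `∫ √(C² + (1 - C²)⟨r, v⟩²) dν(r)` depends only on `ρ ≤ 1` and
increases with it. The supremum defining `g(C, ν)` is therefore attained at every equatorial
`v`, and with `ρ = 1` the integrand becomes `√(1 - (1 - C²) sin² φ)`, whose integral over a full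
period is four times the one over `[0, π/2]`.

If `μ` is supported on the equator, average the direction `v` over `ν` and swap the integrals:
`g(C, μ) ≥ ∫∫ √(C² + (1 - C²)⟨r, s⟩²) dν(s) dμ(r)`, and each inner integral equals `g(C, ν)`
because `r` is equatorial.
-/

lemma integral_comp_cos_mul_add_sin_mul (f : ℝ → ℝ) (a b : ℝ) :
    ∫ φ in 0..2 * π, f (cos φ * a + sin φ * b) = ∫ φ in 0..2 * π, f (√(a ^ 2 + b ^ 2) * cos φ) := by
  set z : ℂ := ⟨a, b⟩
  have hz : ‖z‖ = √(a ^ 2 + b ^ 2) := Complex.norm_eq_sqrt_sq_add_sq z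
  have ha : ‖z‖ * cos z.arg = a := Complex.norm_mul_cos_arg z
  have hb : ‖z‖ * sin z.arg = b := Complex.norm_mul_sin_arg z
  have hrot : ∀ φ, cos φ * a + sin φ * b = ‖z‖ * cos (φ - z.arg) := fun φ => by
    rw [cos_sub, ← ha, ← hb]
    ring
  have hper : Function.Periodic (fun φ => f (‖z‖ * cos φ)) (2 * π) := fun φ => by
    simp only [cos_add_two_pi]
  simp only [hrot, intervalIntegral.integral_comp_sub_right (fun φ => f (‖z‖ * cos φ)), ← hz]
  simpa [sub_eq_neg_add] using hper.intervalIntegral_add_eq (-z.arg) 0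

lemma integral_two_periods_eq_four_mul_integral_half_period {f : ℝ → ℝ} {T : ℝ} (hf : Continuous f)
    (hper : Function.Periodic f T) (hsymm : ∀ x, f (T - x) = f x) :
    ∫ x in 0..2 * T, f x = 4 * ∫ x in 0..T / 2, f x := by
  have hint : ∀ a b : ℝ, IntervalIntegrable f volume a b := hf.intervalIntegrable
  have htwo : ∫ x in 0..2 * T, f x = 2 * ∫ x in 0..T, f x := by
    simpa [two_mul] using hper.intervalIntegral_add_eq_add 0 T hint
  have hhalf : ∫ x in T / 2..T, f x = ∫ x in 0..T / 2, f x := by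
    simpa [hsymm, show T - T / 2 = T / 2 by ring] using
      (intervalIntegral.integral_comp_sub_left (a := 0) (b := T / 2) f T).symm
  rw [htwo, ← intervalIntegral.integral_add_adjacent_intervals (hint 0 (T / 2)) (hint _ T),
    hhalf]
  ring

def gKernel (C t : ℝ) : ℝ := √(C ^ 2 + (1 - C ^ 2) * t ^ 2)

lemma g_eq_iSup (C : ℝ) (μ : Measure E3) :
    g C μ = ⨆ v : unitSphere, ∫ r, gKernel C (inner ℝ r (v : E3)) ∂μ := rfl

@[fun_prop]
lemma continuous_gKernel (C : ℝ) : Continuous (gKernel C) := by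
  unfold gKernel; fun_prop

lemma gKernel_le_gKernel {C s t : ℝ} (hC : C ^ 2 ≤ 1) (hst : |s| ≤ |t|) :
    gKernel C s ≤ gKernel C t := by
  unfold gKernel
  have := sq_le_sq.2 hst
  gcongr

lemma gKernel_one (C : ℝ) : gKernel C 1 = 1 := by simp [gKernel]

lemma gKernel_nonneg (C t : ℝ) : 0 ≤ gKernel C t := sqrt_nonneg _

lemma norm_gKernel_le_one {C t : ℝ} (hC : C ^ 2 ≤ 1) (ht : |t| ≤ 1) : ‖gKernel C t‖ ≤ 1 := by
  rw [norm_of_nonneg (gKernel_nonneg C t)]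
  exact gKernel_one C ▸ gKernel_le_gKernel hC (by simpa using ht)

lemma gKernel_cos (C φ : ℝ) : gKernel C (cos φ) = √(1 - (1 - C ^ 2) * sin φ ^ 2) := by
  rw [gKernel, cos_sq']
  ring_nf

lemma eqPt_apply_zero (φ : ℝ) : eqPt φ 0 = cos φ := by simp [eqPt]

lemma eqPt_apply_one (φ : ℝ) : eqPt φ 1 = sin φ := by simp [eqPt]

lemma inner_eqPt (φ : ℝ) (v : E3) : inner ℝ (eqPt φ) v = cos φ * v 0 + sin φ * v 1 := by
  simp [eqPt, PiLp.inner_apply, Fin.sum_univ_three, mul_comm]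

lemma eqPt_mem_unitSphere (φ : ℝ) : eqPt φ ∈ unitSphere := by
  rw [unitSphere, mem_sphere_zero_iff_norm, EuclideanSpace.norm_eq, Fin.sum_univ_three]
  simp [eqPt]

@[fun_prop]
lemma continuous_eqPt : Continuous eqPt :=
  (PiLp.continuous_toLp 2 _).comp <| continuous_pi fun i => by
    fin_cases i <;> simp <;> fun_prop

lemma sqrt_eqPt_sq_add_sq (φ : ℝ) : √(eqPt φ 0 ^ 2 + eqPt φ 1 ^ 2) = 1 := by
  simp [eqPt_apply_zero, eqPt_apply_one]

instance isProbabilityMeasure_equatorUniform : IsProbabilityMeasure equatorUniform := by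
  have : IsProbabilityMeasure
      ((ENNReal.ofReal (2 * π))⁻¹ • volume.restrict (Set.Ico 0 (2 * π))) := by
    constructor
    rw [Measure.smul_apply, Measure.restrict_apply_univ, Real.volume_Ico, sub_zero, smul_eq_mul]
    exact ENNReal.inv_mul_cancel (ENNReal.ofReal_pos.2 two_pi_pos).ne' ENNReal.ofReal_ne_top
  exact Measure.isProbabilityMeasure_map continuous_eqPt.aemeasurable

lemma ae_mem_unitSphere_equatorUniform : ∀ᵐ s ∂equatorUniform, s ∈ unitSphere :=
  (ae_map_iff continuous_eqPt.aemeasurable Metric.isClosed_sphere.measurableSet).2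
    (.of_forall eqPt_mem_unitSphere)

lemma integral_equatorUniform {f : E3 → ℝ} (hf : Continuous f) :
    ∫ r, f r ∂equatorUniform = (2 * π)⁻¹ * ∫ φ in 0..2 * π, f (eqPt φ) := by
  rw [equatorUniform, integral_map continuous_eqPt.aemeasurable hf.aestronglyMeasurable,
    integral_smul_measure, ENNReal.toReal_inv, ENNReal.toReal_ofReal two_pi_pos.le,
    intervalIntegral.integral_of_le two_pi_pos.le, integral_Ioc_eq_integral_Ioo,
    ← integral_Ico_eq_integral_Ioo, smul_eq_mul]

instance : Nonempty unitSphere := ⟨⟨eqPt 0, eqPt_mem_unitSphere 0⟩⟩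

def equatorProfile (C ρ : ℝ) : ℝ := (2 * π)⁻¹ * ∫ φ in 0..2 * π, gKernel C (ρ * cos φ)

lemma integral_gKernel_equatorUniform (C : ℝ) (v : E3) :
    ∫ r, gKernel C (inner ℝ r v) ∂equatorUniform = equatorProfile C √(v 0 ^ 2 + v 1 ^ 2) := by
  rw [integral_equatorUniform (by fun_prop), equatorProfile]
  simp only [inner_eqPt, integral_comp_cos_mul_add_sin_mul (gKernel C)]

lemma equatorProfile_le {C ρ ρ' : ℝ} (hC : C ^ 2 ≤ 1) (hρ : |ρ| ≤ |ρ'|) :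
    equatorProfile C ρ ≤ equatorProfile C ρ' := by
  have hpt : ∀ φ, gKernel C (ρ * cos φ) ≤ gKernel C (ρ' * cos φ) := fun φ => by
    refine gKernel_le_gKernel hC ?_
    rw [abs_mul, abs_mul]
    exact mul_le_mul_of_nonneg_right hρ (abs_nonneg _)
  refine mul_le_mul_of_nonneg_left ?_ (by positivity)
  exact intervalIntegral.integral_mono_on two_pi_pos.le
    (Continuous.intervalIntegrable (by fun_prop) _ _)
    (Continuous.intervalIntegrable (by fun_prop) _ _) fun φ _ => hpt φ

lemma equatorProfile_one (C : ℝ) :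
    equatorProfile C 1 = (2 / π) * ∫ φ in 0..π / 2, √(1 - (1 - C ^ 2) * sin φ ^ 2) := by
  have hsymm : ∀ φ, √(1 - (1 - C ^ 2) * sin (π - φ) ^ 2) = √(1 - (1 - C ^ 2) * sin φ ^ 2) :=
    fun φ => by rw [sin_pi_sub]
  have hper : Function.Periodic (fun φ => √(1 - (1 - C ^ 2) * sin φ ^ 2)) π :=
    fun φ => by simp only [sin_add_pi, neg_sq]
  simp only [equatorProfile, one_mul, gKernel_cos,
    integral_two_periods_eq_four_mul_integral_half_period (by fun_prop) hper hsymm]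
  field_simp
  ring

lemma sq_add_sq_le_one_of_mem_unitSphere {v : E3} (hv : v ∈ unitSphere) :
    v 0 ^ 2 + v 1 ^ 2 ≤ 1 := by
  rw [unitSphere, mem_sphere_zero_iff_norm] at hv
  have := EuclideanSpace.real_norm_sq_eq v
  rw [hv, Fin.sum_univ_three] at this
  nlinarith [sq_nonneg (v 2)]

lemma abs_inner_le_one_of_mem_unitSphere {r v : E3} (hr : r ∈ unitSphere) (hv : v ∈ unitSphere) :
    |inner ℝ r v| ≤ 1 := by
  rw [unitSphere, mem_sphere_zero_iff_norm] at hr hv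
  simpa [hr, hv] using abs_real_inner_le_norm r v

lemma integral_gKernel_inner_eqPt (C θ : ℝ) :
    ∫ r, gKernel C (inner ℝ r (eqPt θ)) ∂equatorUniform = equatorProfile C 1 := by
  rw [integral_gKernel_equatorUniform, sqrt_eqPt_sq_add_sq]

lemma g_equatorUniform {C : ℝ} (hC : C ^ 2 ≤ 1) : g C equatorUniform = equatorProfile C 1 := by
  have hle : ∀ v : unitSphere,
      ∫ r, gKernel C (inner ℝ r (v : E3)) ∂equatorUniform ≤ equatorProfile C 1 := by
    rintro ⟨v, hv⟩
    rw [integral_gKernel_equatorUniform]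
    refine equatorProfile_le hC ?_
    rw [abs_one, abs_of_nonneg (sqrt_nonneg _)]
    exact sqrt_le_one.2 (sq_add_sq_le_one_of_mem_unitSphere hv)
  rw [g_eq_iSup]
  refine le_antisymm (ciSup_le hle) ?_
  exact le_ciSup_of_le ⟨_, Set.forall_mem_range.2 hle⟩ ⟨eqPt 0, eqPt_mem_unitSphere 0⟩
    (integral_gKernel_inner_eqPt C 0).ge

section SphereMeasures

variable {C : ℝ} {μ : Measure E3} [IsProbabilityMeasure μ]

lemma integral_gKernel_le_one (hC : C ^ 2 ≤ 1) (hμ : ∀ᵐ r ∂μ, r ∈ unitSphere) {v : E3}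
    (hv : v ∈ unitSphere) : ∫ r, gKernel C (inner ℝ r v) ∂μ ≤ 1 := by
  have hbound : ∀ᵐ r ∂μ, ‖gKernel C (inner ℝ r v)‖ ≤ 1 := by
    filter_upwards [hμ] with r hr
    exact norm_gKernel_le_one hC (abs_inner_le_one_of_mem_unitSphere hr hv)
  simpa using (le_abs_self _).trans (norm_integral_le_of_norm_le_const hbound)

lemma integral_integral_gKernel_le_g (hC : C ^ 2 ≤ 1) {ν : Measure E3} [IsProbabilityMeasure ν]
    (hμ : ∀ᵐ r ∂μ, r ∈ unitSphere) (hν : ∀ᵐ s ∂ν, s ∈ unitSphere) :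
    ∫ r, ∫ s, gKernel C (inner ℝ r s) ∂ν ∂μ ≤ g C μ := by
  have hint : Integrable (Function.uncurry fun r s => gKernel C (inner ℝ r s)) (μ.prod ν) := by
    refine Integrable.mono' (integrable_const 1) (by fun_prop) ?_
    filter_upwards [Measure.quasiMeasurePreserving_fst.ae hμ,
      Measure.quasiMeasurePreserving_snd.ae hν] with p hr hs
    exact norm_gKernel_le_one hC (abs_inner_le_one_of_mem_unitSphere hr hs)
  have hbdd : BddAbove (Set.range fun v : unitSphere => ∫ r, gKernel C (inner ℝ r (v : E3)) ∂μ) :=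
    ⟨1, Set.forall_mem_range.2 fun v => integral_gKernel_le_one hC hμ v.2⟩
  calc ∫ r, ∫ s, gKernel C (inner ℝ r s) ∂ν ∂μ
      = ∫ s, ∫ r, gKernel C (inner ℝ r s) ∂μ ∂ν := integral_integral_swap hint
    _ ≤ ∫ _, g C μ ∂ν := by
      refine integral_mono_ae hint.integral_prod_right (integrable_const _) ?_
      filter_upwards [hν] with s hs
      exact (g_eq_iSup C μ).symm ▸ le_ciSup hbdd ⟨s, hs⟩
    _ = g C μ := by simp

end SphereMeasures

lemma integral_sqrt_one_sub_sin_sq : ∫ φ in 0..π / 2, √(1 - sin φ ^ 2) = 1 := by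
  have hcos : ∀ φ ∈ Set.uIcc 0 (π / 2), √(1 - sin φ ^ 2) = cos φ := fun φ hφ => by
    rw [Set.uIcc_of_le (by positivity)] at hφ
    rw [← cos_sq', sqrt_sq (cos_nonneg_of_mem_Icc ⟨by linarith [hφ.1, pi_pos], hφ.2⟩)]
  simp [intervalIntegral.integral_congr hcos]

/-- Let `ν` be the uniform probability measure on the equator of the unit sphere S² of ℝ³.
Then for every `C ∈ [0,1]`, `g(C,ν) = (2/π)∫₀^{π/2} √(1 − (1−C²)sin²φ) dφ`; in particular
`g*(ν) = g(0,ν) = 2/π`.  Moreover, every Borel probability measure `μ` supported on the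
equator satisfies `g(C,μ) ≥ g(C,ν)` for all `C ∈ [0,1]`. -/
theorem g_equator :
    (∀ C ∈ Set.Icc (0 : ℝ) 1,
      g C equatorUniform
        = (2 / π) * ∫ φ in (0 : ℝ)..(π / 2), Real.sqrt (1 - (1 - C ^ 2) * Real.sin φ ^ 2)) ∧
    g 0 equatorUniform = 2 / π ∧
    (∀ μ : Measure E3, IsProbabilityMeasure μ → μ (Set.range eqPt)ᶜ = 0 →
      ∀ C ∈ Set.Icc (0 : ℝ) 1, g C equatorUniform ≤ g C μ) := by
  have hval : ∀ C ∈ Set.Icc (0 : ℝ) 1, g C equatorUniform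
      = (2 / π) * ∫ φ in (0 : ℝ)..(π / 2), √(1 - (1 - C ^ 2) * sin φ ^ 2) := fun C hC => by
    rw [g_equatorUniform (pow_le_one₀ hC.1 hC.2), equatorProfile_one]
  refine ⟨hval, ?_, fun μ _ hsupp C hC => ?_⟩
  · simpa [integral_sqrt_one_sub_sin_sq] using hval 0 ⟨le_rfl, zero_le_one⟩
  have hC2 : C ^ 2 ≤ 1 := pow_le_one₀ hC.1 hC.2
  have hμ : ∀ᵐ r ∂μ, r ∈ Set.range eqPt := ae_iff.2 hsupp
  calc g C equatorUniform = ∫ _, equatorProfile C 1 ∂μ := by simp [g_equatorUniform hC2]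
    _ = ∫ r, ∫ s, gKernel C (inner ℝ r s) ∂equatorUniform ∂μ := by
        refine integral_congr_ae ?_
        filter_upwards [hμ] with r ⟨θ, hθ⟩
        simp_rw [← hθ, ← real_inner_comm (eqPt θ), integral_gKernel_inner_eqPt]
    _ ≤ g C μ := integral_integral_gKernel_le_g hC2
        (hμ.mono fun _ ⟨θ, hθ⟩ => hθ ▸ eqPt_mem_unitSphere θ) ae_mem_unitSphere_equatorUniform
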